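/- arXiv:1302.4190 — 5 statements merged into one kernel-verified Lean document; each statement's English description precedes it below -/
import Mathlib

section
/- Let (G, τ) be a Hausdorff SIN first-countable paratopological group and let {Uₙ : n ∈ ℕ} be a decreasing countable base of open neighborhoods of the identity e. Then there is a topology τ* on G, coarser than τ, such that for each x ∈ G the family {x·Uₙ·Uₙ⁻¹ : n ∈ ℕ} is a neighborhood base at x for τ*, and (G, τ*) is a metrizable topological group (in particular, the inverse operation is τ*-continuous). -/
/-!
Write `V W := W * W⁻¹`. In a paratopological group the sets `V W`, `W ∈ 𝓝 1`, are symmetric, and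
the SIN property makes them a group filter basis: for `a, b, c, d ∈ W` one has
`a b⁻¹ c d⁻¹ = (a · b⁻¹ c b) (d b)⁻¹`, and `b⁻¹ c b` stays small uniformly in `b`. The group
topology they generate is coarser than the original one because `W ⊆ V W`, it is Hausdorff because
`g ∈ V W` means that `g W` meets `W`, and a first-countable Hausdorff topological group is
metrizable.
-/

open Topology Pointwise Filter Set

theorem IsTopologicalGroup.metrizableSpace_of_isCountablyGenerated_nhds_one {G : Type*} [Group G]
    [TopologicalSpace G] [IsTopologicalGroup G] [T0Space G] [(𝓝 (1 : G)).IsCountablyGenerated] :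
    TopologicalSpace.MetrizableSpace G :=
  letI := IsTopologicalGroup.rightUniformSpace G
  haveI : (uniformity G).IsCountablyGenerated := comap.isCountablyGenerated _ _
  UniformSpace.metrizableSpace

def IsSIN (G : Type*) [Group G] [TopologicalSpace G] : Prop :=
  ∀ U ∈ 𝓝 (1 : G), ∃ V ∈ 𝓝 (1 : G), ∀ x : G, ∀ v ∈ V, x * v * x⁻¹ ∈ U

section ContinuousMul

variable {G : Type*} [Group G] [TopologicalSpace G] [ContinuousMul G]

theorem exists_nhds_one_notMem_mul_inv [T2Space G] {g : G} (hg : g ≠ 1) :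
    ∃ W ∈ 𝓝 (1 : G), g ∉ W * W⁻¹ := by
  have hdisj : Disjoint (map (g * ·) (𝓝 1)) (𝓝 (1 : G)) :=
    (disjoint_nhds_nhds.2 hg).mono_left ((continuous_const_mul g).tendsto' 1 g (mul_one g))
  obtain ⟨A, hA, B, hB, hAB⟩ := Filter.disjoint_iff.1 hdisj
  refine ⟨(g * ·) ⁻¹' A ∩ B, inter_mem hA hB, ?_⟩
  rintro ⟨a, ha, b, hb, rfl⟩
  have hgb : a * b * b⁻¹ = a := by group
  exact hAB.ne_of_mem (hgb ▸ hb.1) ha.2 rfl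

namespace IsSIN

theorem exists_mul_inv_mul_mul_inv_subset (h : IsSIN G) {W : Set G} (hW : W ∈ 𝓝 1) :
    ∃ V ∈ 𝓝 (1 : G), V * V⁻¹ * (V * V⁻¹) ⊆ W * W⁻¹ := by
  obtain ⟨K, hK, hKK⟩ := exists_nhds_one_split hW
  obtain ⟨C, hC, hCK⟩ := h K hK
  refine ⟨C ∩ K, inter_mem hC hK, ?_⟩
  rintro _ ⟨_, ⟨a, ha, b, hb, rfl⟩, _, ⟨c, hc, d, hd, rfl⟩, rfl⟩
  rw [Set.mem_inv] at hb hd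
  -- `b ∈ K⁻¹` need not be small, so `b c b⁻¹ ∈ K` needs the SIN property
  have hconj : a * b * (c * d) = (a * (b * c * b⁻¹)) * (d⁻¹ * b⁻¹)⁻¹ := by group
  show a * b * (c * d) ∈ W * W⁻¹
  rw [hconj]
  exact mul_mem_mul (hKK _ ha.2 _ (hCK b c hc.1)) (inv_mem_inv.2 (hKK _ hd.2 _ hb.2))

variable (h : IsSIN G)

abbrev groupFilterBasis : GroupFilterBasis G where
  sets := (fun W => W * W⁻¹) '' (𝓝 (1 : G)).sets
  nonempty := ⟨_, mem_image_of_mem _ univ_mem⟩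
  inter_sets := by
    rintro _ _ ⟨W₁, hW₁, rfl⟩ ⟨W₂, hW₂, rfl⟩
    exact ⟨_, mem_image_of_mem _ (inter_mem hW₁ hW₂),
      subset_inter (mul_subset_mul inter_subset_left (inv_subset_inv.2 inter_subset_left))
        (mul_subset_mul inter_subset_right (inv_subset_inv.2 inter_subset_right))⟩
  one' := by
    rintro _ ⟨W, hW, rfl⟩
    exact ⟨1, mem_of_mem_nhds hW, 1, by simpa using mem_of_mem_nhds hW, by simp⟩
  mul' := by
    rintro _ ⟨W, hW, rfl⟩
    obtain ⟨V, hV, hVW⟩ := h.exists_mul_inv_mul_mul_inv_subset hW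
    exact ⟨_, mem_image_of_mem _ hV, hVW⟩
  inv' := by
    rintro _ ⟨W, hW, rfl⟩
    refine ⟨_, mem_image_of_mem _ hW, fun g hg => ?_⟩
    rwa [mem_preimage, ← Set.mem_inv, mul_inv_rev, inv_inv]
  conj' := by
    rintro x _ ⟨W, hW, rfl⟩
    have hconj : Tendsto (fun y => x * y * x⁻¹) (𝓝 1) (𝓝 1) :=
      ((continuous_const_mul x).mul continuous_const).tendsto' 1 1 (by simp)
    refine ⟨_, mem_image_of_mem _ (hconj hW), ?_⟩
    rintro _ ⟨a, ha, b, hb, rfl⟩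
    have hab : x * (a * b) * x⁻¹ = x * a * x⁻¹ * (x * b⁻¹ * x⁻¹)⁻¹ := by group
    rw [mem_preimage, hab]
    exact mul_mem_mul ha (inv_mem_inv.2 hb)

theorem nhds_one_hasBasis {ι : Sort*} {p : ι → Prop} {s : ι → Set G}
    (hs : (𝓝 (1 : G)).HasBasis p s) :
    (@nhds G h.groupFilterBasis.topology 1).HasBasis p (fun i => s i * (s i)⁻¹) := by
  refine h.groupFilterBasis.nhds_one_hasBasis.to_hasBasis ?_ ?_
  · rintro _ ⟨W, hW, rfl⟩
    obtain ⟨i, hi, hiW⟩ := hs.mem_iff.1 hW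
    exact ⟨i, hi, mul_subset_mul hiW (inv_subset_inv.2 hiW)⟩
  · exact fun i hi => ⟨_, mem_image_of_mem _ (hs.mem_of_mem hi), subset_rfl⟩

theorem nhds_hasBasis {ι : Sort*} {p : ι → Prop} {s : ι → Set G}
    (hs : (𝓝 (1 : G)).HasBasis p s) (x : G) :
    (@nhds G h.groupFilterBasis.topology x).HasBasis p (fun i => x • (s i * (s i)⁻¹)) := by
  rw [← @map_mul_left_nhds_one G h.groupFilterBasis.topology]
  simpa only [← smul_eq_mul, image_smul] using (h.nhds_one_hasBasis hs).map (x * ·)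

theorem le_topology : ‹TopologicalSpace G› ≤ h.groupFilterBasis.topology := by
  refine (le_iff_nhds _ _).2 fun x => ((h.nhds_hasBasis (𝓝 1).basis_sets x).ge_iff).2 ?_
  intro W hW
  have hxW : x • W ∈ 𝓝 x := by simpa using smul_mem_nhds_smul x hW
  exact mem_of_superset hxW (smul_set_mono (subset_mul_left W (by simpa using mem_of_mem_nhds hW)))

theorem t2Space_topology [T2Space G] : @T2Space G h.groupFilterBasis.topology := by
  refine @IsTopologicalGroup.t2Space_of_one_sep G h.groupFilterBasis.topology _ _ fun g hg => ?_
  obtain ⟨W, hW, hgW⟩ := exists_nhds_one_notMem_mul_inv hg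
  exact ⟨_, (h.nhds_one_hasBasis (𝓝 1).basis_sets).mem_of_mem hW, hgW⟩

theorem metrizableSpace_topology [T2Space G] [(𝓝 (1 : G)).IsCountablyGenerated] :
    @TopologicalSpace.MetrizableSpace G h.groupFilterBasis.topology := by
  obtain ⟨s, hs⟩ := (𝓝 (1 : G)).exists_antitone_basis
  have hcount := (h.nhds_one_hasBasis hs.toHasBasis).isCountablyGenerated
  have := h.t2Space_topology
  exact @IsTopologicalGroup.metrizableSpace_of_isCountablyGenerated_nhds_one G _
    h.groupFilterBasis.topology _ _ hcount

end IsSIN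

end ContinuousMul

theorem SIN_firstCountable_coarser_metrizable_group_topology_general
    {G : Type*} [Group G] [t : TopologicalSpace G] [T2Space G] [ContinuousMul G]
    (hSIN : ∀ U ∈ 𝓝 (1 : G), ∃ V ∈ 𝓝 (1 : G), ∀ x : G, ∀ v ∈ V, x * v * x⁻¹ ∈ U)
    (U : ℕ → Set G)
    (hbase : (𝓝 (1 : G)).HasBasis (fun _ : ℕ => True) U) :
    ∃ t' : TopologicalSpace G, t ≤ t' ∧
      (∀ x : G, (@nhds G t' x).HasBasis (fun _ : ℕ => True)
        (fun n => x • (U n * (U n)⁻¹))) ∧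
      @TopologicalSpace.MetrizableSpace G t' ∧
      @IsTopologicalGroup G t' _ := by
  have h : IsSIN G := hSIN
  have := hbase.isCountablyGenerated
  exact ⟨_, h.le_topology, h.nhds_hasBasis hbase, h.metrizableSpace_topology,
    h.groupFilterBasis.isTopologicalGroup⟩

/-- Let `(G, τ)` be a Hausdorff SIN first-countable paratopological group and let
`{Uₙ : n ∈ ℕ}` be a decreasing countable base of open neighborhoods of the identity.
Then there is a topology `τ*` on `G`, coarser than `τ`, such that for each `x ∈ G`
the family `{x • (Uₙ * Uₙ⁻¹) : n ∈ ℕ}` is a neighborhood base at `x` for `τ*`, and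
`(G, τ*)` is a metrizable topological group. -/
theorem SIN_firstCountable_coarser_metrizable_group_topology
    {G : Type*} [Group G] [t : TopologicalSpace G] [T2Space G] [ContinuousMul G]
    [FirstCountableTopology G]
    (hSIN : ∀ U ∈ 𝓝 (1 : G), ∃ V ∈ 𝓝 (1 : G), ∀ x : G, ∀ v ∈ V, x * v * x⁻¹ ∈ U)
    (U : ℕ → Set G)
    (hopen : ∀ n, IsOpen (U n)) (hmem : ∀ n, (1 : G) ∈ U n)
    (hdec : ∀ n, U (n + 1) ⊆ U n)
    (hbase : (𝓝 (1 : G)).HasBasis (fun _ : ℕ => True) U) :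
    ∃ t' : TopologicalSpace G, t ≤ t' ∧
      (∀ x : G, (@nhds G t' x).HasBasis (fun _ : ℕ => True)
        (fun n => x • (U n * (U n)⁻¹))) ∧
      @TopologicalSpace.MetrizableSpace G t' ∧
      @IsTopologicalGroup G t' _ :=
  SIN_firstCountable_coarser_metrizable_group_topology_general (t := t) hSIN U hbase
end

section
/- If (G, τ) is a Hausdorff Abelian paratopological group which has countable π-character at the identity, then G is submetrizable. -/
open Topology Filter Pointwise

/-!
The sets `U / U`, for `U` a neighbourhood of `1`, form a neighbourhood base at `1` of a group
topology coarser than the given one; commutativity is what makes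
`(W / W) * (W / W) = (W * W) / (W * W)`. This topology is Hausdorff: if `x = u / v` with `u, v`
close to `1`, then `u = x * v` is close both to `1` and to `x`. A countable π-base `Vₙ` at `1`
gives the countable base `Vₙ / Vₙ`, since some translate of `Vₙ` is a neighbourhood of `1`.
Finally, a Hausdorff first-countable topological group is metrizable (Birkhoff–Kakutani).
-/

theorem Set.smul_set_div_smul_set_self {G : Type*} [CommGroup G] (c : G) (A : Set G) :
    c • A / c • A = A / A := by
  rw [← Set.singleton_smul, smul_eq_mul, mul_div_mul_comm, Set.singleton_div_singleton,
    div_self', Set.singleton_one, one_mul]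

theorem exists_mem_nhds_one_notMem_div_self {G : Type*} [Group G] [TopologicalSpace G]
    [ContinuousMul G] [T2Space G] {x : G} (hx : x ≠ 1) : ∃ U ∈ 𝓝 (1 : G), x ∉ U / U := by
  obtain ⟨A, hA, C, hC, hAC⟩ := Filter.disjoint_iff.1 (disjoint_nhds_nhds.2 hx)
  have hxA : (x * ·) ⁻¹' A ∈ 𝓝 (1 : G) :=
    (continuous_const_mul x).continuousAt.preimage_mem_nhds (by rwa [mul_one])
  refine ⟨C ∩ (x * ·) ⁻¹' A, inter_mem hC hxA, ?_⟩
  rintro ⟨u, ⟨huC, -⟩, v, ⟨-, hvA⟩, huv⟩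
  rw [div_eq_iff_eq_mul] at huv
  exact hAC.ne_of_mem (huv ▸ hvA) huC rfl

theorem IsTopologicalGroup.metrizableSpace_of_commGroup {G : Type*} [CommGroup G]
    [TopologicalSpace G] [IsTopologicalGroup G] [T0Space G]
    [(𝓝 (1 : G)).IsCountablyGenerated] : TopologicalSpace.MetrizableSpace G := by
  let := IsTopologicalGroup.rightUniformSpace G
  have := isUniformGroup_of_commGroup (G := G)
  have := IsUniformGroup.uniformity_countably_generated (α := G)
  exact UniformSpace.metrizableSpace

section

variable (G : Type*) [CommGroup G] [TopologicalSpace G] [ContinuousMul G]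

abbrev divNhdsOneFilterBasis : GroupFilterBasis G :=
  groupFilterBasisOfComm {s | ∃ U ∈ 𝓝 (1 : G), s = U / U}
    ⟨Set.univ / Set.univ, Set.univ, univ_mem, rfl⟩
    (by
      rintro _ _ ⟨U, hU, rfl⟩ ⟨W, hW, rfl⟩
      exact ⟨(U ∩ W) / (U ∩ W), ⟨U ∩ W, inter_mem hU hW, rfl⟩,
        Set.subset_inter (Set.div_subset_div Set.inter_subset_left Set.inter_subset_left)
          (Set.div_subset_div Set.inter_subset_right Set.inter_subset_right)⟩)
    (by
      rintro _ ⟨U, hU, rfl⟩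
      simpa using Set.div_mem_div (mem_of_mem_nhds hU) (mem_of_mem_nhds hU))
    (by
      rintro _ ⟨U, hU, rfl⟩
      obtain ⟨W, hWo, hW1, hWU⟩ := exists_open_nhds_one_mul_subset hU
      refine ⟨W / W, ⟨W, hWo.mem_nhds hW1, rfl⟩, ?_⟩
      rw [div_mul_div_comm]
      exact Set.div_subset_div hWU hWU)
    (by
      rintro _ ⟨U, hU, rfl⟩
      exact ⟨U / U, ⟨U, hU, rfl⟩, by rw [Set.inv_preimage, inv_div]⟩)

variable {G}

theorem div_self_mem_divNhdsOneFilterBasis {A : Set G} (hA : IsOpen A) (hne : A.Nonempty) :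
    A / A ∈ divNhdsOneFilterBasis G := by
  obtain ⟨a, ha⟩ := hne
  refine ⟨a⁻¹ • A, (hA.smul a⁻¹).mem_nhds ?_, (Set.smul_set_div_smul_set_self a⁻¹ A).symm⟩
  simpa using Set.smul_mem_smul_set (a := a⁻¹) ha

theorem nhds_one_le_divNhdsOneFilterBasis_filter :
    𝓝 1 ≤ (divNhdsOneFilterBasis G).filter := by
  refine (divNhdsOneFilterBasis G).toFilterBasis.hasBasis.ge_iff.2 ?_
  rintro _ ⟨U, hU, rfl⟩
  exact mem_of_superset hU (Set.subset_div_left (mem_of_mem_nhds hU))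

theorem le_divNhdsOneFilterBasis_topology :
    ‹TopologicalSpace G› ≤ (divNhdsOneFilterBasis G).topology := by
  refine (le_iff_nhds _ _).2 fun x => ?_
  rw [GroupFilterBasis.nhds_eq, GroupFilterBasis.N]
  calc 𝓝 x = map (x * ·) (𝓝 1) := by simpa using ((Homeomorph.mulLeft x).map_nhds_eq 1).symm
    _ ≤ _ := map_mono nhds_one_le_divNhdsOneFilterBasis_filter

theorem t2Space_divNhdsOneFilterBasis_topology [T2Space G] :
    @T2Space G (divNhdsOneFilterBasis G).topology := by
  have hsep (x : G) (hx : x ≠ 1) := exists_mem_nhds_one_notMem_div_self hx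
  let := (divNhdsOneFilterBasis G).topology
  refine IsTopologicalGroup.t2Space_of_one_sep fun x hx => ?_
  obtain ⟨U, hU, hxU⟩ := hsep x hx
  exact ⟨U / U, GroupFilterBasis.mem_nhds_one _ ⟨U, hU, rfl⟩, hxU⟩

theorem divNhdsOneFilterBasis_filter_hasBasis_of_piBase {V : ℕ → Set G}
    (hV : ∀ n, IsOpen (V n) ∧ (V n).Nonempty) (hpi : ∀ U ∈ 𝓝 (1 : G), ∃ n, V n ⊆ U) :
    (divNhdsOneFilterBasis G).filter.HasBasis (fun _ => True) (fun n => V n / V n) := by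
  refine ⟨fun s => (divNhdsOneFilterBasis G).toFilterBasis.hasBasis.mem_iff.trans ⟨?_, ?_⟩⟩
  · rintro ⟨_, ⟨U, hU, rfl⟩, hUs⟩
    obtain ⟨n, hn⟩ := hpi U hU
    exact ⟨n, trivial, (Set.div_subset_div hn hn).trans hUs⟩
  · rintro ⟨n, -, hns⟩
    exact ⟨V n / V n, div_self_mem_divNhdsOneFilterBasis (hV n).1 (hV n).2, hns⟩

end

/-- If `(G, τ)` is a Hausdorff Abelian paratopological group with countable π-character
at the identity (there is a countable family of nonempty open sets such that every
neighborhood of the identity contains a member of the family), then `G` is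
submetrizable: there is a metrizable topology on `G` coarser than `τ`. -/
theorem hausdorff_abelian_countable_piCharacter_paratopological_group_submetrizable
    {G : Type*} [CommGroup G] [t : TopologicalSpace G] [T2Space G] [ContinuousMul G]
    (V : ℕ → Set G)
    (hV : ∀ n, IsOpen (V n) ∧ (V n).Nonempty)
    (hpi : ∀ U ∈ 𝓝 (1 : G), ∃ n, V n ⊆ U) :
    ∃ t' : TopologicalSpace G, t ≤ t' ∧ @TopologicalSpace.MetrizableSpace G t' := by
  let B := divNhdsOneFilterBasis G
  have hcount : (@nhds G B.topology 1).IsCountablyGenerated := by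
    rw [B.nhds_one_eq]
    exact (divNhdsOneFilterBasis_filter_hasBasis_of_piBase hV hpi).isCountablyGenerated
  have ht2 : @T2Space G B.topology := t2Space_divNhdsOneFilterBasis_topology
  exact ⟨B.topology, le_divNhdsOneFilterBasis_topology,
    @IsTopologicalGroup.metrizableSpace_of_commGroup G _ B.topology _ _ hcount⟩
end

section
/- Let (G, τ) be a Hausdorff separable SIN first-countable paratopological group. Then there exist a second-countable metrizable topological group H and a continuous bijective group homomorphism from G onto H. -/
/-!
In a SIN paratopological group `(G, τ)` the sets `U * U⁻¹`, `U ∈ 𝓝 1`, form the neighbourhood base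
at `1` of a group topology `τ*` coarser than `τ`: continuity of multiplication makes the base
closed under products, and the SIN condition makes it stable under conjugation. The topology `τ*`
inherits Hausdorffness, first countability and separability from `τ`, so by Birkhoff–Kakutani it
is metrizable, and being separable it is second countable. The identity `(G, τ) → (G, τ*)` is the
required continuous isomorphism.
-/

open Topology

/-- A continuous bijective group homomorphism from `G` onto a second-countable
metrizable topological group. -/
structure ContinuousIsoOntoSecondCountableMetrizableGroup
    (G : Type*) [Group G] [TopologicalSpace G] where
  H : Type*
  [group : Group H]
  [top : TopologicalSpace H]
  secondCountable : SecondCountableTopology H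
  metrizable : TopologicalSpace.MetrizableSpace H
  topologicalGroup : IsTopologicalGroup H
  φ : G →* H
  continuous : Continuous φ
  bijective : Function.Bijective φ

open Filter Set Pointwise TopologicalSpace Uniformity

universe u v

section TopologicalGroup

variable (G : Type*) [Group G] [TopologicalSpace G] [IsTopologicalGroup G]
  [FirstCountableTopology G]

-- Birkhoff–Kakutani
theorem IsTopologicalGroup.metrizableSpace_of_firstCountable [T0Space G] : MetrizableSpace G :=
  letI := IsTopologicalGroup.rightUniformSpace G
  haveI : (𝓤 G).IsCountablyGenerated := comap.isCountablyGenerated _ _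
  UniformSpace.metrizableSpace

theorem IsTopologicalGroup.secondCountableTopology_of_separable [SeparableSpace G] :
    SecondCountableTopology G :=
  letI := IsTopologicalGroup.rightUniformSpace G
  haveI : (𝓤 G).IsCountablyGenerated := comap.isCountablyGenerated _ _
  UniformSpace.secondCountable_of_separable G

end TopologicalGroup

theorem small_of_secondCountableTopology (X : Type u) [TopologicalSpace X] [T3Space X]
    [SecondCountableTopology X] : Small.{v} X :=
  let ⟨_, hf⟩ := exists_embedding_l_infty X
  small_of_injective hf.injective

instance Shrink.isTopologicalGroup (H : Type u) [Group H] [TopologicalSpace H]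
    [IsTopologicalGroup H] [Small.{v} H] : IsTopologicalGroup (Shrink.{v} H) :=
  (Shrink.homeomorph H).symm.isInducing.topologicalGroup (Shrink.mulEquiv (α := H))

-- The target group may live in any universe, hence the passage through `Shrink`.
theorem ContinuousIsoOntoSecondCountableMetrizableGroup.nonempty_of_mulEquiv
    {G : Type u} {H : Type*} [Group G] [TopologicalSpace G] [Group H] [TopologicalSpace H]
    [IsTopologicalGroup H] [SecondCountableTopology H] [MetrizableSpace H]
    (e : G ≃* H) (he : Continuous e) :
    Nonempty (ContinuousIsoOntoSecondCountableMetrizableGroup.{u, v} G) :=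
  haveI := small_of_secondCountableTopology.{_, v} H
  ⟨{ H := Shrink.{v} H
     secondCountable := (Shrink.homeomorph H).symm.secondCountableTopology
     metrizable := (Shrink.homeomorph H).symm.isEmbedding.metrizableSpace
     topologicalGroup := inferInstance
     φ := (e.trans Shrink.mulEquiv.symm).toMonoidHom
     continuous := (Shrink.homeomorph H).continuous.comp he
     bijective := (e.trans Shrink.mulEquiv.symm).bijective }⟩

theorem exists_nhds_one_notMem_mul_inv_s7 {G : Type*} [Group G] [TopologicalSpace G]
    [ContinuousMul G] [T2Space G] {x : G} (hx : x ≠ 1) : ∃ U ∈ 𝓝 (1 : G), x ∉ U * U⁻¹ := by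
  obtain ⟨A, C, hA, hC, hAC⟩ := t2_separation_nhds hx
  have hxA : (x * ·) ⁻¹' A ∈ 𝓝 (1 : G) :=
    (continuous_const_mul x).continuousAt.preimage_mem_nhds (by rwa [mul_one])
  refine ⟨(x * ·) ⁻¹' A ∩ C, inter_mem hxA hC, ?_⟩
  rintro ⟨u, hu, v, hv, huv⟩
  -- `u = x v⁻¹` would lie in both `A` and `C`
  exact hAC.le_bot ⟨eq_mul_inv_of_mul_eq huv ▸ hv.1, hu.2⟩

class IsSIN_s7 (G : Type*) [Group G] [TopologicalSpace G] : Prop where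
  exists_conj_mem : ∀ U ∈ 𝓝 (1 : G), ∃ V ∈ 𝓝 (1 : G), ∀ x : G, ∀ v ∈ V, x * v * x⁻¹ ∈ U

-- `G` with the topology `τ*`
def Symmetrization (G : Type*) := G

namespace Symmetrization

variable (G : Type*) [Group G]

instance : Group (Symmetrization G) := ‹Group G›

def toSymmetrization : G ≃* Symmetrization G := MulEquiv.refl G

variable [TopologicalSpace G] [ContinuousMul G] [IsSIN_s7 G]

abbrev groupFilterBasis : GroupFilterBasis G where
  sets := {s | ∃ U ∈ 𝓝 (1 : G), s = U * U⁻¹}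
  nonempty := ⟨_, univ, univ_mem, rfl⟩
  inter_sets := by
    rintro _ _ ⟨U, hU, rfl⟩ ⟨V, hV, rfl⟩
    exact ⟨_, ⟨U ∩ V, inter_mem hU hV, rfl⟩, subset_inter
      (mul_subset_mul inter_subset_left (inv_subset_inv.2 inter_subset_left))
      (mul_subset_mul inter_subset_right (inv_subset_inv.2 inter_subset_right))⟩
  one' := by
    rintro _ ⟨U, hU, rfl⟩
    exact ⟨1, mem_of_mem_nhds hU, 1, by simpa using mem_of_mem_nhds hU, mul_one 1⟩
  mul' := by
    rintro _ ⟨U, hU, rfl⟩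
    obtain ⟨W, hW, hWU⟩ := exists_nhds_one_split hU
    obtain ⟨V, hV, hVW⟩ := IsSIN_s7.exists_conj_mem W hW
    refine ⟨_, ⟨V ∩ W, inter_mem hV hW, rfl⟩, ?_⟩
    rintro _ ⟨_, ⟨a, ha, b, hb, rfl⟩, _, ⟨c, hc, d, hd, rfl⟩, rfl⟩
    -- `a b c d = (a · b c b⁻¹) (b d)`, and the SIN property puts `b c b⁻¹` into `W`
    refine ⟨a * (b * c * b⁻¹), hWU _ ha.2 _ (hVW b c hc.1), b * d, ?_, by group⟩
    simpa using hWU _ hd.2 _ hb.2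
  inv' := by
    rintro _ ⟨U, hU, rfl⟩
    refine ⟨_, ⟨U, hU, rfl⟩, ?_⟩
    rintro _ ⟨u, hu, v, hv, rfl⟩
    exact ⟨v⁻¹, hv, u⁻¹, by simpa using hu, (mul_inv_rev u v).symm⟩
  conj' x := by
    rintro _ ⟨U, hU, rfl⟩
    obtain ⟨V, hV, hVU⟩ := IsSIN_s7.exists_conj_mem U hU
    refine ⟨_, ⟨V, hV, rfl⟩, ?_⟩
    rintro _ ⟨u, hu, v, hv, rfl⟩
    exact ⟨_, hVU x u hu, (x * v⁻¹ * x⁻¹)⁻¹, by simpa using hVU x _ hv, by group⟩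

instance : TopologicalSpace (Symmetrization G) := (groupFilterBasis G).topology

instance : IsTopologicalGroup (Symmetrization G) := (groupFilterBasis G).isTopologicalGroup

theorem nhds_one_hasBasis :
    (𝓝 (1 : Symmetrization G)).HasBasis (fun U : Set G => U ∈ 𝓝 1) fun U => U * U⁻¹ :=
  (groupFilterBasis G).nhds_one_hasBasis.to_hasBasis
    (fun _ ⟨U, hU, hs⟩ => ⟨U, hU, hs.ge⟩) fun U hU => ⟨_, ⟨U, hU, rfl⟩, subset_rfl⟩

theorem continuous_toSymmetrization : Continuous (toSymmetrization G) := by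
  have hone : Tendsto (toSymmetrization G) (𝓝 1) (𝓝 1) :=
    (nhds_one_hasBasis G).tendsto_right_iff.2 fun U hU =>
      mem_of_superset hU fun u hu => ⟨u, hu, 1, by simpa using mem_of_mem_nhds hU, mul_one u⟩
  refine continuous_iff_continuousAt.2 fun x => ?_
  have := ((continuous_const_mul (toSymmetrization G x)).tendsto 1).comp hone
  have hx : map (x * ·) (𝓝 1) = 𝓝 x := by simpa using (Homeomorph.mulLeft x).map_nhds_eq 1
  rw [ContinuousAt, ← hx, tendsto_map'_iff]
  simpa [Function.comp_def] using this

instance [T2Space G] : T2Space (Symmetrization G) :=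
  IsTopologicalGroup.t2Space_of_one_sep fun _ hx =>
    let ⟨_, hU, hxU⟩ := exists_nhds_one_notMem_mul_inv_s7 (G := G) hx
    ⟨_, (nhds_one_hasBasis G).mem_of_mem hU, hxU⟩

instance [FirstCountableTopology G] : FirstCountableTopology (Symmetrization G) := by
  obtain ⟨u, hu⟩ := (𝓝 (1 : G)).exists_antitone_basis
  have : (𝓝 (1 : Symmetrization G)).IsCountablyGenerated :=
    ((nhds_one_hasBasis G).to_hasBasis
      (fun U hU => let ⟨n, hn⟩ := hu.mem_iff.1 hU
        ⟨n, trivial, mul_subset_mul hn (inv_subset_inv.2 hn)⟩)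
      fun n _ => ⟨u n, hu.mem n, subset_rfl⟩).isCountablyGenerated
  exact ⟨fun x => map_mul_left_nhds_one x ▸ inferInstance⟩

instance [SeparableSpace G] : SeparableSpace (Symmetrization G) :=
  (toSymmetrization G).surjective.denseRange.separableSpace (continuous_toSymmetrization G)

end Symmetrization

/-- Let `(G, τ)` be a Hausdorff separable SIN first-countable paratopological group.
Then there exist a second-countable metrizable topological group `H` and a continuous
bijective group homomorphism from `G` onto `H`. -/
theorem hausdorff_separable_SIN_firstCountable_continuous_iso
    {G : Type*} [Group G] [TopologicalSpace G] [T2Space G] [ContinuousMul G]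
    [TopologicalSpace.SeparableSpace G] [FirstCountableTopology G]
    (hSIN : ∀ U ∈ 𝓝 (1 : G), ∃ V ∈ 𝓝 (1 : G), ∀ x : G, ∀ v ∈ V, x * v * x⁻¹ ∈ U) :
    Nonempty (ContinuousIsoOntoSecondCountableMetrizableGroup G) := by
  have : IsSIN_s7 G := ⟨hSIN⟩
  have := IsTopologicalGroup.metrizableSpace_of_firstCountable (Symmetrization G)
  have := IsTopologicalGroup.secondCountableTopology_of_separable (Symmetrization G)
  exact ContinuousIsoOntoSecondCountableMetrizableGroup.nonempty_of_mulEquiv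
    (Symmetrization.toSymmetrization G) (Symmetrization.continuous_toSymmetrization G)
end

section
/- Every regular T1 Baire quasi-developable paratopological group G is a metrizable topological group (in particular, the inverse operation on G is continuous and the topology of G is metrizable). -/
open Topology Filter Set Uniformity Pointwise

/-!
Let `U` be a neighbourhood of `1` and `V` an open one with `V² ⊆ U`. The sets
`Sₙ = {x | st(x, Pₙ) ⊆ xV}` cover `G`, so by Baire category some `Sₙ` is dense in a nonempty
open set `O`. If `x₀, y ∈ Sₙ` lie in a common member `A` of `Pₙ`, then `x₀ ∈ st(y, Pₙ)` gives
`y⁻¹x₀ ∈ V`; passing to the closure, `w⁻¹x₀ ∈ V² ⊆ U` for every `w` in the neighbourhood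
`A ∩ O` of `x₀`, which, written as `w = x₀y`, says `y⁻¹ ∈ U` for all `y` near `1`. So inversion
is continuous at `1`, hence everywhere. A quasi-development makes `G` first countable, and a
first countable T₀ topological group is metrizable (Birkhoff–Kakutani, through its countably
generated right uniformity).
-/

/-- `P : ℕ → Set (Set X)` is a quasi-development for `X`: each `P n` is a family of
open sets, and for every point `x` and open `U ∋ x` there is `n` with
`x ∈ st(x, P n) ⊆ U`, where `st(x, P n) = ⋃₀ {A ∈ P n | x ∈ A}`. -/
def IsQuasiDevelopment {X : Type*} [TopologicalSpace X] (P : ℕ → Set (Set X)) : Prop :=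
  (∀ n, ∀ A ∈ P n, IsOpen A) ∧
  ∀ x : X, ∀ U : Set X, IsOpen U → x ∈ U →
    ∃ n, x ∈ ⋃₀ {A | A ∈ P n ∧ x ∈ A} ∧ ⋃₀ {A | A ∈ P n ∧ x ∈ A} ⊆ U

def starOf {X : Type*} (𝒜 : Set (Set X)) (x : X) : Set X :=
  ⋃₀ {A | A ∈ 𝒜 ∧ x ∈ A}

namespace IsQuasiDevelopment

variable {X : Type*} [TopologicalSpace X] {P : ℕ → Set (Set X)}

theorem isOpen_starOf (hP : IsQuasiDevelopment P) (n : ℕ) (x : X) :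
    IsOpen (starOf (P n) x) :=
  isOpen_sUnion fun A hA => hP.1 n A hA.1

theorem exists_starOf_subset (hP : IsQuasiDevelopment P) {x : X} {U : Set X}
    (hU : IsOpen U) (hx : x ∈ U) : ∃ n, x ∈ starOf (P n) x ∧ starOf (P n) x ⊆ U :=
  hP.2 x U hU hx

theorem nhds_basis_starOf (hP : IsQuasiDevelopment P) (x : X) :
    (𝓝 x).HasBasis (fun n => x ∈ starOf (P n) x) (fun n => starOf (P n) x) := by
  refine ⟨fun U => ⟨fun hU => ?_, fun ⟨n, hxn, hnU⟩ => ?_⟩⟩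
  · obtain ⟨V, hVU, hVo, hxV⟩ := mem_nhds_iff.mp hU
    obtain ⟨n, hxn, hnV⟩ := hP.exists_starOf_subset hVo hxV
    exact ⟨n, hxn, hnV.trans hVU⟩
  · exact mem_of_superset ((hP.isOpen_starOf n x).mem_nhds hxn) hnU

theorem firstCountableTopology (hP : IsQuasiDevelopment P) : FirstCountableTopology X :=
  ⟨fun x => (hP.nhds_basis_starOf x).isCountablyGenerated⟩

end IsQuasiDevelopment

section ParatopologicalGroup

variable {G : Type*} [Group G] [TopologicalSpace G] [ContinuousMul G]

theorem ContinuousInv.of_tendsto_inv_nhds_one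
    (h : Tendsto (fun x : G => x⁻¹) (𝓝 1) (𝓝 1)) : ContinuousInv G :=
  ContinuousInv.of_nhds_one h
    (fun x => by simpa using ((Homeomorph.mulLeft x).map_nhds_eq 1).symm)
    fun x => ((continuous_const.mul continuous_id).mul continuous_const).tendsto' 1 1 (by simp)

theorem closure_setOf_inv_mul_mem_subset {V : Set G} (hV : V ∈ 𝓝 1) (a : G) :
    closure {y | y⁻¹ * a ∈ V} ⊆ {z | z⁻¹ * a ∈ V * V} := by
  intro z hz
  have hzV : {y | z⁻¹ * y ∈ V} ∈ 𝓝 z :=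
    (continuous_const.mul continuous_id).continuousAt.preimage_mem_nhds (by simpa using hV)
  obtain ⟨y, hzy, hya⟩ := mem_closure_iff_nhds.mp hz _ hzV
  have : z⁻¹ * y * (y⁻¹ * a) ∈ V * V := mul_mem_mul hzy hya
  simpa [mul_assoc] using this

theorem exists_isOpen_subset_closure_setOf_inv_mul_mem [BaireSpace G]
    {P : ℕ → Set (Set G)} (hP : IsQuasiDevelopment P) {V : Set G} (hV : IsOpen V)
    (hV1 : (1 : G) ∈ V) :
    ∃ x₀ W, IsOpen W ∧ x₀ ∈ W ∧ W ⊆ closure {y | y⁻¹ * x₀ ∈ V} := by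
  set S : ℕ → Set G := fun n => {x | x ∈ starOf (P n) x ∧ starOf (P n) x ⊆ {y | x⁻¹ * y ∈ V}}
  have hcover : ⋃ n, closure (S n) = univ := by
    refine eq_univ_of_forall fun x => ?_
    obtain ⟨n, hn⟩ := hP.exists_starOf_subset (hV.preimage (continuous_const.mul continuous_id))
      (show x⁻¹ * x ∈ V by simpa using hV1)
    exact mem_iUnion.2 ⟨n, subset_closure hn⟩
  obtain ⟨n, hn⟩ := nonempty_interior_of_iUnion_of_closed (fun _ => isClosed_closure) hcover
  set O := interior (closure (S n))
  obtain ⟨x₀, hx₀O, hx₀S⟩ : (O ∩ S n).Nonempty := by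
    obtain ⟨y, hy⟩ := hn
    exact mem_closure_iff.mp (interior_subset hy) O isOpen_interior hy
  obtain ⟨⟨A, ⟨hAP, hx₀A⟩, -⟩, -⟩ := hx₀S
  have hW : IsOpen (A ∩ O) := (hP.1 n A hAP).inter isOpen_interior
  refine ⟨x₀, A ∩ O, hW, ⟨hx₀A, hx₀O⟩, fun w hw => ?_⟩
  have hSW : S n ∩ (A ∩ O) ⊆ {y | y⁻¹ * x₀ ∈ V} := fun y ⟨⟨_, hyst⟩, hyA, _⟩ =>
    hyst ⟨A, ⟨hAP, hyA⟩, hx₀A⟩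
  have hw' : w ∈ closure (A ∩ O ∩ S n) := hW.inter_closure ⟨hw, interior_subset hw.2⟩
  exact closure_mono (by rw [inter_comm]; exact hSW) hw'

theorem tendsto_inv_nhds_one_of_isQuasiDevelopment [BaireSpace G] {P : ℕ → Set (Set G)}
    (hP : IsQuasiDevelopment P) : Tendsto (fun x : G => x⁻¹) (𝓝 1) (𝓝 1) := by
  intro U hU
  obtain ⟨V, hV, hV1, hVU⟩ := exists_open_nhds_one_mul_subset hU
  obtain ⟨x₀, W, hW, hx₀W, hWV⟩ :=
    exists_isOpen_subset_closure_setOf_inv_mul_mem hP hV hV1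
  have hW₁ : (x₀ * ·) ⁻¹' W ∈ 𝓝 (1 : G) :=
    (continuous_const.mul continuous_id).continuousAt.preimage_mem_nhds
      (hW.mem_nhds (by simpa using hx₀W))
  refine mem_map.2 (mem_of_superset hW₁ fun y hy => hVU ?_)
  simpa [mul_assoc] using closure_setOf_inv_mul_mem_subset (hV.mem_nhds hV1) x₀ (hWV hy)

end ParatopologicalGroup

theorem IsTopologicalGroup.metrizableSpace {G : Type*} [Group G] [TopologicalSpace G]
    [IsTopologicalGroup G] [FirstCountableTopology G] [T0Space G] :
    TopologicalSpace.MetrizableSpace G := by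
  let := IsTopologicalGroup.rightUniformSpace G
  have : (𝓤 G).IsCountablyGenerated := by
    rw [uniformity_eq_comap_nhds_one']
    exact comap.isCountablyGenerated _ _
  exact UniformSpace.metrizableSpace

theorem regular_baire_quasiDevelopable_paratopological_group_metrizable_topological_group_general
    {G : Type*} [Group G] [TopologicalSpace G] [ContinuousMul G]
    [T1Space G] [BaireSpace G]
    (hqd : ∃ P : ℕ → Set (Set G), IsQuasiDevelopment P) :
    IsTopologicalGroup G ∧ TopologicalSpace.MetrizableSpace G := by
  obtain ⟨P, hP⟩ := hqd
  have := hP.firstCountableTopology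
  have := ContinuousInv.of_tendsto_inv_nhds_one (tendsto_inv_nhds_one_of_isQuasiDevelopment hP)
  have : IsTopologicalGroup G := ⟨⟩
  exact ⟨inferInstance, IsTopologicalGroup.metrizableSpace⟩

/-- Every regular T1 Baire quasi-developable paratopological group is a metrizable
topological group: the inverse operation is continuous and the topology is metrizable. -/
theorem regular_baire_quasiDevelopable_paratopological_group_metrizable_topological_group
    {G : Type*} [Group G] [TopologicalSpace G] [ContinuousMul G]
    [RegularSpace G] [T1Space G] [BaireSpace G]
    (hqd : ∃ P : ℕ → Set (Set G), IsQuasiDevelopment P) :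
    IsTopologicalGroup G ∧ TopologicalSpace.MetrizableSpace G :=
  regular_baire_quasiDevelopable_paratopological_group_metrizable_topological_group_general hqd
end

section
/- The Sorgenfrey line is not H-closed as a paratopological group: there exist a Hausdorff paratopological group H and an injective group homomorphism φ from (ℝ, +) into H which is a topological embedding with respect to the Sorgenfrey topology on ℝ, such that the image φ(ℝ) is not closed in H. -/
open Topology

/-- The Sorgenfrey topology on `ℝ`: generated by the half-open intervals `[a, b)`. -/
def sorgenfreyTopology : TopologicalSpace ℝ :=
  TopologicalSpace.generateFrom {s : Set ℝ | ∃ a b : ℝ, s = Set.Ico a b}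

/-- A witness that the Sorgenfrey line is not H-closed: a Hausdorff paratopological
group `H` together with an injective group homomorphism `φ` from `(ℝ, +)` into `H`
which is a topological embedding with respect to the Sorgenfrey topology on `ℝ`,
such that the image `φ(ℝ)` is not closed in `H`. -/
structure SorgenfreyNotHClosedWitness where
  H : Type
  [addGroup : AddGroup H]
  [top : TopologicalSpace H]
  hausdorff : T2Space H
  paratopological : ContinuousAdd H
  φ : ℝ →+ H
  injective : Function.Injective φ
  embedding : @IsEmbedding ℝ H sorgenfreyTopology top φ
  image_not_closed : ¬ IsClosed (Set.range φ)

/-!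
Take `ℝ × ℤ` with the translation-invariant topology in which the sets `basicNbhd m` form a
neighbourhood basis of `0`; `basicNbhd m` consists of the points `(seq i₁ + ⋯ + seq iₖ + r, k)`
with `k ≥ 0`, all `iⱼ ≥ m` and `0 ≤ r < 2⁻ᵐ`. Since `basicNbhd (m + 1) + basicNbhd (m + 1)` lies
in `basicNbhd m`, addition is continuous. Only `k = 0` meets `ℝ × {0}`, so `x ↦ (x, 0)` embeds
the Sorgenfrey line, and its image is not closed because `(0, -1) + (seq m, 1) = (seq m, 0)` puts
`(0, -1)` in its closure.

For the Hausdorff property, `seq n ≡ seq m [ZMOD modulus m]` for `n ≥ m`, where `modulus m`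
exceeds `(m + 1) * seq m`. If `(t, k)` is a difference of two points of `basicNbhd m`, then `t`
lies within `2⁻ᵐ` of an integer `T` with `T ≡ k * seq m [ZMOD modulus m]`; for large `m` this
forces `t = T` and then `T = k = 0`.
-/
open Filter Set Pointwise

section TranslationTopology

variable {G : Type*} [AddCommMonoid G]

abbrev translationTopology (W : ℕ → Set G) : TopologicalSpace G :=
  .mkOfNhds fun a => map (a + ·) (⨅ m, 𝓟 (W m))

variable {W : ℕ → Set G}

lemma antitone_of_add_subset (h0 : ∀ m, (0 : G) ∈ W m)
    (hadd : ∀ m, W (m + 1) + W (m + 1) ⊆ W m) : Antitone W :=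
  antitone_nat_of_succ_le fun m w hw => by simpa using hadd m (add_mem_add hw (h0 (m + 1)))

lemma hasBasis_nhds_translationTopology (h0 : ∀ m, (0 : G) ∈ W m)
    (hadd : ∀ m, W (m + 1) + W (m + 1) ⊆ W m) (a : G) :
    (@nhds G (translationTopology W) a).HasBasis (fun _ => True) fun m => (a + ·) '' W m := by
  have hF : (⨅ m, 𝓟 (W m)).HasBasis (fun _ => True) W :=
    hasBasis_iInf_principal (antitone_of_add_subset h0 hadd).directed_ge
  have hb : ∀ a : G,
      (map (a + ·) (⨅ m, 𝓟 (W m))).HasBasis (fun _ => True) fun m => (a + ·) '' W m :=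
    fun a => hF.map _
  rw [translationTopology, TopologicalSpace.nhds_mkOfNhds_of_hasBasis hb]
  · exact hb a
  · intro a m _
    exact ⟨0, h0 m, add_zero a⟩
  · rintro a m -
    refine (hb a).eventually_iff.2 ⟨m + 1, trivial, ?_⟩
    rintro _ ⟨w, hw, rfl⟩
    refine (hb _).mem_iff.2 ⟨m + 1, trivial, ?_⟩
    rintro _ ⟨w', hw', rfl⟩
    exact ⟨w + w', hadd m (add_mem_add hw hw'), (add_assoc a w w').symm⟩

lemma continuousAdd_translationTopology (h0 : ∀ m, (0 : G) ∈ W m)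
    (hadd : ∀ m, W (m + 1) + W (m + 1) ⊆ W m) :
    @ContinuousAdd G (translationTopology W) _ := by
  let := translationTopology W
  have hb := hasBasis_nhds_translationTopology h0 hadd
  have hb0 : (𝓝 (0 : G)).HasBasis (fun _ => True) W := by simpa using hb 0
  refine continuousAdd_of_comm_of_nhds_zero G ?_ fun a => (hb a).eq_of_same_basis (hb0.map _)
  refine ((hb0.prod hb0).tendsto_iff hb0).2 fun m _ => ⟨(m + 1, m + 1), ⟨trivial, trivial⟩, ?_⟩
  rintro ⟨w, w'⟩ ⟨hw, hw'⟩
  exact hadd m (add_mem_add hw hw')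

end TranslationTopology

lemma nhds_sorgenfreyTopology (x : ℝ) : @nhds ℝ sorgenfreyTopology x = 𝓝[≥] x := by
  rw [sorgenfreyTopology, TopologicalSpace.nhds_generateFrom]
  refine le_antisymm ((nhdsGE_basis_Ico x).ge_iff.2 fun u hu => ?_) ?_
  · exact mem_iInf_of_mem (Ico x u)
      (mem_iInf_of_mem ⟨left_mem_Ico.2 hu, x, u, rfl⟩ (mem_principal_self _))
  · simp only [le_iInf_iff, le_principal_iff]
    rintro _ ⟨hx, a, b, rfl⟩
    exact mem_of_superset (Ico_mem_nhdsGE hx.2) (Ico_subset_Ico_left hx.1)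

lemma hasBasis_nhdsGE_two_inv_pow (x : ℝ) :
    (𝓝[≥] x).HasBasis (fun _ => True) fun m : ℕ => Ico x (x + (2⁻¹ : ℝ) ^ m) :=
  (nhdsGE_basis_Ico x).to_hasBasis
    (fun u hu => (exists_pow_lt_of_lt_one (sub_pos.2 hu) (by norm_num : (2⁻¹ : ℝ) < 1)).imp
      fun m hm => ⟨trivial, Ico_subset_Ico_right (by linarith)⟩)
    fun m _ => ⟨x + (2⁻¹ : ℝ) ^ m, by simp, subset_rfl⟩

namespace Sorgenfrey

def seqPair : ℕ → ℤ × ℤ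
  | 0 => (1, 1)
  | n + 1 =>
    ((seqPair n).1 + (seqPair n).2, (n + 2) * ((seqPair n).1 + (seqPair n).2) * (seqPair n).2)

def seq (n : ℕ) : ℤ := (seqPair n).1

def modulus (n : ℕ) : ℤ := (seqPair n).2

lemma seq_succ (n : ℕ) : seq (n + 1) = seq n + modulus n := rfl

lemma modulus_succ (n : ℕ) : modulus (n + 1) = (n + 2) * seq (n + 1) * modulus n := rfl

lemma succ_le_seq_and_one_le_modulus (n : ℕ) : (n : ℤ) + 1 ≤ seq n ∧ 1 ≤ modulus n := by
  induction n with
  | zero => exact ⟨le_rfl, le_rfl⟩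
  | succ n ih =>
    have hseq : ((n + 1 : ℕ) : ℤ) + 1 ≤ seq (n + 1) := by rw [seq_succ]; push_cast; linarith
    refine ⟨hseq, ?_⟩
    rw [modulus_succ]
    exact one_le_mul_of_one_le_of_one_le
      (one_le_mul_of_one_le_of_one_le (by omega) (by omega)) ih.2

lemma succ_le_seq (n : ℕ) : (n : ℤ) + 1 ≤ seq n := (succ_le_seq_and_one_le_modulus n).1

lemma one_le_modulus (n : ℕ) : 1 ≤ modulus n := (succ_le_seq_and_one_le_modulus n).2

lemma succ_mul_seq_le_modulus (n : ℕ) : ((n : ℤ) + 1) * seq n ≤ modulus n := by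
  cases n with
  | zero => rfl
  | succ n =>
    rw [modulus_succ]
    push_cast
    exact le_mul_of_one_le_right (by nlinarith [succ_le_seq (n + 1)]) (one_le_modulus n)

lemma modulus_dvd_modulus {m n : ℕ} (h : m ≤ n) : modulus m ∣ modulus n := by
  induction n, h using Nat.le_induction with
  | base => rfl
  | succ n _ ih => exact ih.mul_left _

lemma modulus_dvd_seq_sub {m n : ℕ} (h : m ≤ n) : modulus m ∣ seq n - seq m := by
  induction n, h using Nat.le_induction with
  | base => simp
  | succ n hmn ih =>
    rw [seq_succ, add_sub_right_comm]
    exact dvd_add ih (modulus_dvd_modulus hmn)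

lemma eventually_not_modulus_dvd {T k : ℤ} (h : (T, k) ≠ 0) :
    ∀ᶠ m in atTop, ¬ modulus m ∣ T - k * seq m := by
  filter_upwards [eventually_ge_atTop (T.natAbs + k.natAbs)] with m hm hdvd
  have hm' : |T| + |k| ≤ m := by rw [Int.abs_eq_natAbs, Int.abs_eq_natAbs]; exact_mod_cast hm
  have hT : |T| < seq m := by linarith [succ_le_seq m, abs_nonneg k]
  have hpos : 0 < seq m := by linarith [abs_nonneg T]
  have hseq : |seq m| = seq m := abs_of_pos hpos
  have hne : T - k * seq m ≠ 0 := by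
    intro h0
    rcases eq_or_ne k 0 with rfl | hk
    · exact h (by simpa [Prod.ext_iff] using h0)
    · have : |T| = |k| * seq m := by rw [sub_eq_zero.1 h0, abs_mul, hseq]
      nlinarith [mul_le_mul_of_nonneg_right (Int.one_le_abs hk) hpos.le]
  refine hne (Int.eq_zero_of_abs_lt_dvd hdvd ?_)
  calc |T - k * seq m| ≤ |T| + |k| * seq m := by
        simpa [abs_mul, hseq] using abs_sub T (k * seq m)
    _ < (m + 1) * seq m := by nlinarith [abs_nonneg T, abs_nonneg k]
    _ ≤ modulus m := succ_mul_seq_le_modulus m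

def sums (m : ℕ) : AddSubmonoid (ℤ × ℤ) :=
  AddSubmonoid.closure ((fun i => (seq i, 1)) '' Ici m)

lemma sums_anti : Antitone sums := fun _ _ h =>
  AddSubmonoid.closure_mono (image_mono (Ici_subset_Ici.2 h))

lemma modulus_dvd_of_mem_sums {m : ℕ} {σ : ℤ × ℤ} (hσ : σ ∈ sums m) :
    modulus m ∣ σ.1 - σ.2 * seq m := by
  induction hσ using AddSubmonoid.closure_induction with
  | mem _ h =>
    obtain ⟨i, hi, rfl⟩ := h
    simpa using modulus_dvd_seq_sub hi
  | zero => simp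
  | add σ τ _ _ hσ hτ =>
    rw [Prod.fst_add, Prod.snd_add, add_mul, add_sub_add_comm]
    exact dvd_add hσ hτ

lemma eq_zero_or_snd_pos_of_mem_sums {m : ℕ} {σ : ℤ × ℤ} (hσ : σ ∈ sums m) :
    σ = 0 ∨ 0 < σ.2 := by
  induction hσ using AddSubmonoid.closure_induction with
  | mem _ h =>
    obtain ⟨i, -, rfl⟩ := h
    exact Or.inr one_pos
  | zero => exact Or.inl rfl
  | add σ τ _ _ hσ hτ =>
    rcases hσ with rfl | hσ
    · simpa using hτ
    rcases hτ with rfl | hτ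
    · simpa using Or.inr hσ
    exact Or.inr (add_pos hσ hτ)

def basicNbhd (m : ℕ) : Set (ℝ × ℤ) :=
  {p | ∃ σ ∈ sums m, p.2 = σ.2 ∧ p.1 - σ.1 ∈ Ico 0 ((2⁻¹ : ℝ) ^ m)}

lemma zero_mem_basicNbhd (m : ℕ) : (0 : ℝ × ℤ) ∈ basicNbhd m :=
  ⟨0, zero_mem _, rfl, by simp⟩

lemma basicNbhd_add_subset (m : ℕ) : basicNbhd (m + 1) + basicNbhd (m + 1) ⊆ basicNbhd m := by
  rintro _ ⟨w, ⟨σ, hσ, h2, h1⟩, w', ⟨σ', hσ', h2', h1'⟩, rfl⟩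
  refine ⟨σ + σ', add_mem (sums_anti m.le_succ hσ) (sums_anti m.le_succ hσ'),
    by simp [h2, h2'], ?_⟩
  simp only [mem_Ico, Prod.fst_add, pow_succ, Int.cast_add] at h1 h1' ⊢
  constructor <;> linarith

lemma mk_zero_mem_basicNbhd_iff {m : ℕ} {x : ℝ} :
    (x, 0) ∈ basicNbhd m ↔ x ∈ Ico 0 ((2⁻¹ : ℝ) ^ m) := by
  refine ⟨?_, fun hx => ⟨0, zero_mem _, rfl, by simpa using hx⟩⟩
  rintro ⟨σ, hσ, h2, h1⟩
  obtain rfl : σ = 0 := (eq_zero_or_snd_pos_of_mem_sums hσ).resolve_right (by simp [← h2])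
  simpa using h1

lemma seq_mem_basicNbhd (m : ℕ) : ((seq m : ℝ), 1) ∈ basicNbhd m :=
  ⟨(seq m, 1), AddSubmonoid.subset_closure ⟨m, self_mem_Ici, rfl⟩, rfl, by simp⟩

lemma eventually_int_cast_eq_of_abs_sub_lt (t : ℝ) :
    ∀ᶠ m in atTop, ∀ N : ℤ, |t - N| < (2⁻¹ : ℝ) ^ m → (N : ℝ) = t := by
  have hclosed : IsClosed (((↑) : ℤ → ℝ) '' {N | (N : ℝ) ≠ t}) :=
    Int.isClosedEmbedding_coe_real.isClosedMap _ (isClosed_discrete _)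
  have ht : t ∉ ((↑) : ℤ → ℝ) '' {N | (N : ℝ) ≠ t} := fun ⟨_, hN, h⟩ => hN h
  obtain ⟨δ, hδ, hball⟩ := Metric.isOpen_iff.1 hclosed.isOpen_compl t ht
  have hpow := tendsto_pow_atTop_nhds_zero_of_lt_one (r := (2⁻¹ : ℝ)) (by norm_num) (by norm_num)
  filter_upwards [hpow.eventually (gt_mem_nhds hδ)] with m hm N hN
  by_contra hNt
  exact hball (by rw [Metric.mem_ball, Real.dist_eq, abs_sub_comm]; linarith) ⟨N, hNt, rfl⟩

lemma eventually_forall_sub_ne {d : ℝ × ℤ} (hd : d ≠ 0) :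
    ∀ᶠ m in atTop, ∀ w ∈ basicNbhd m, ∀ w' ∈ basicNbhd m, w - w' ≠ d := by
  obtain ⟨t, k⟩ := d
  have hdvd : ∀ᶠ m in atTop, ∀ T : ℤ, (T : ℝ) = t → ¬ modulus m ∣ T - k * seq m := by
    by_cases ht : ∃ T : ℤ, (T : ℝ) = t
    · obtain ⟨T, rfl⟩ := ht
      have hTk : (T, k) ≠ 0 := by simpa [Prod.ext_iff] using hd
      filter_upwards [eventually_not_modulus_dvd hTk] with m hm T' hT'
      rwa [Int.cast_inj.1 hT']
    · exact Eventually.of_forall fun m T hT => (ht ⟨T, hT⟩).elim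
  filter_upwards [eventually_int_cast_eq_of_abs_sub_lt t, hdvd] with m hnear hdvd
  rintro w ⟨σ, hσ, h2, h1⟩ w' ⟨σ', hσ', h2', h1'⟩ hww'
  simp only [Prod.ext_iff, Prod.fst_sub, Prod.snd_sub] at hww'
  have hN : |t - ((σ.1 - σ'.1 : ℤ) : ℝ)| < (2⁻¹ : ℝ) ^ m := by
    rw [abs_lt]; push_cast; rw [mem_Ico] at h1 h1'
    constructor <;> linarith [hww'.1]
  refine hdvd (σ.1 - σ'.1) (hnear _ hN) ?_
  have hsplit : σ.1 - σ'.1 - k * seq m = (σ.1 - σ.2 * seq m) - (σ'.1 - σ'.2 * seq m) := by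
    rw [← hww'.2, h2, h2']; ring
  rw [hsplit]
  exact dvd_sub (modulus_dvd_of_mem_sums hσ) (modulus_dvd_of_mem_sums hσ')

abbrev prodIntTopology : TopologicalSpace (ℝ × ℤ) := translationTopology basicNbhd

lemma hasBasis_nhds_prodIntTopology (p : ℝ × ℤ) :
    (@nhds _ prodIntTopology p).HasBasis (fun _ => True) fun m => (p + ·) '' basicNbhd m :=
  hasBasis_nhds_translationTopology zero_mem_basicNbhd basicNbhd_add_subset p

lemma t2Space_prodIntTopology : @T2Space (ℝ × ℤ) prodIntTopology := by
  let := prodIntTopology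
  refine t2Space_iff_disjoint_nhds.2 fun p q hpq => ?_
  obtain ⟨m, hm⟩ := (eventually_forall_sub_ne (sub_ne_zero.2 hpq.symm)).exists
  refine ((hasBasis_nhds_prodIntTopology p).disjoint_iff (hasBasis_nhds_prodIntTopology q)).2
    ⟨m, trivial, m, trivial, ?_⟩
  rw [disjoint_left]
  rintro _ ⟨w, hw, rfl⟩ ⟨w', hw', h⟩
  exact hm w hw w' hw' (sub_eq_sub_iff_add_eq_add.2 (by rw [add_comm]; exact h.symm))

lemma inl_preimage_add_image_basicNbhd (x : ℝ) (m : ℕ) :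
    AddMonoidHom.inl ℝ ℤ ⁻¹' ((AddMonoidHom.inl ℝ ℤ x + ·) '' basicNbhd m) =
      Ico x (x + (2⁻¹ : ℝ) ^ m) := by
  ext y
  rw [image_add_left, mem_preimage, mem_preimage, AddMonoidHom.inl_apply, AddMonoidHom.inl_apply,
    Prod.neg_mk, Prod.mk_add_mk, neg_zero, add_zero, mk_zero_mem_basicNbhd_iff, mem_Ico, mem_Ico]
  constructor <;> rintro ⟨h1, h2⟩ <;> constructor <;> linarith

lemma isEmbedding_inl :
    @IsEmbedding ℝ (ℝ × ℤ) sorgenfreyTopology prodIntTopology (AddMonoidHom.inl ℝ ℤ) := by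
  let := prodIntTopology
  let := sorgenfreyTopology
  refine ⟨isInducing_iff_nhds.2 fun x => ?_, Prod.mk_left_injective 0⟩
  rw [nhds_sorgenfreyTopology]
  refine (hasBasis_nhdsGE_two_inv_pow x).eq_of_same_basis ?_
  simpa only [inl_preimage_add_image_basicNbhd] using
    (hasBasis_nhds_prodIntTopology (AddMonoidHom.inl ℝ ℤ x)).comap (AddMonoidHom.inl ℝ ℤ)

lemma not_isClosed_range_inl : ¬ IsClosed[prodIntTopology] (range (AddMonoidHom.inl ℝ ℤ)) := by
  let := prodIntTopology
  intro h
  have hmem : ((0 : ℝ), (-1 : ℤ)) ∈ closure (range (AddMonoidHom.inl ℝ ℤ)) :=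
    (mem_closure_iff_nhds_basis (hasBasis_nhds_prodIntTopology _)).2 fun m _ =>
      ⟨_, ⟨seq m, rfl⟩, _, seq_mem_basicNbhd m, by simp⟩
  obtain ⟨x, hx⟩ := h.closure_eq ▸ hmem
  simp [Prod.ext_iff] at hx

end Sorgenfrey

/-- The Sorgenfrey line is not H-closed as a paratopological group. -/
theorem sorgenfrey_line_not_H_closed : Nonempty SorgenfreyNotHClosedWitness :=
  ⟨{ H := ℝ × ℤ
     top := Sorgenfrey.prodIntTopology
     hausdorff := Sorgenfrey.t2Space_prodIntTopology
     paratopological := continuousAdd_translationTopology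
       Sorgenfrey.zero_mem_basicNbhd Sorgenfrey.basicNbhd_add_subset
     φ := AddMonoidHom.inl ℝ ℤ
     injective := Prod.mk_left_injective 0
     embedding := Sorgenfrey.isEmbedding_inl
     image_not_closed := Sorgenfrey.not_isClosed_range_inl }⟩
end
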